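/- Let Ω ⊆ ℂⁿ be open, and let A, E ⊂⊂ Ω be non-pluripolar. Define h_E(z) = sup { f(z) − sup_E f : f ∈ PSH(Ω), sup_Ω f ≤ 0, sup_A f ≥ −1 }. Then for every z ∈ Ω, h_E(z) ≤ (u_{E,Ω}(z) + 1) / |sup_A u_{E,Ω}|, where u_{E,Ω} is the relative extremal function of E in Ω. -/

import Mathlib

open MeasureTheory Metric Set

/-- Plurisubharmonicity for `EReal`-valued functions on an open set `Ω` of a complex
normed space: upper semicontinuity together with the sub-mean value inequality on every
complex disc contained in `Ω`, the circle average being expressed via continuous majorants. -/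
def IsPSHOnE {V : Type*} [NormedAddCommGroup V] [NormedSpace ℂ V]
    (u : V → EReal) (Ω : Set V) : Prop :=
  UpperSemicontinuousOn u Ω ∧
  ∀ a ∈ Ω, ∀ b : V, ∀ r : ℝ, 0 < r →
    (∀ w : ℂ, ‖w‖ ≤ r → a + w • b ∈ Ω) →
    ∀ g : ℝ → ℝ, Continuous g →
      (∀ θ : ℝ, u (a + (circleMap 0 r θ) • b) ≤ ((g θ : ℝ) : EReal)) →
      u a ≤ (((2 * Real.pi)⁻¹ * ∫ θ in (0:ℝ)..(2 * Real.pi), g θ : ℝ) : EReal)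

/-- Plurisubharmonicity for real-valued functions. -/
def IsPSHOn {V : Type*} [NormedAddCommGroup V] [NormedSpace ℂ V]
    (f : V → ℝ) (Ω : Set V) : Prop :=
  IsPSHOnE (fun z => ((f z : ℝ) : EReal)) Ω

/-- A set is pluripolar if it is contained in the `-∞` set of a plurisubharmonic
function on the whole space which is not identically `-∞`. -/
def IsPluripolar {V : Type*} [NormedAddCommGroup V] [NormedSpace ℂ V] (E : Set V) : Prop :=
  ∃ u : V → EReal, IsPSHOnE u Set.univ ∧ (¬ ∀ z, u z = ⊥) ∧ ∀ z ∈ E, u z = ⊥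

/-- The Lelong class: entire plurisubharmonic functions of at most logarithmic growth. -/
def InLelongClass {V : Type*} [NormedAddCommGroup V] [NormedSpace ℂ V] (f : V → ℝ) : Prop :=
  IsPSHOn f Set.univ ∧ ∃ C : ℝ, ∀ z, f z ≤ Real.log (max ‖z‖ 1) + C

/-- The Siciak extremal function of a set `E`. -/
noncomputable def siciak {V : Type*} [NormedAddCommGroup V] [NormedSpace ℂ V]
    (E : Set V) (z : V) : ℝ :=
  sSup {y | ∃ f : V → ℝ, InLelongClass f ∧ (∀ x ∈ E, f x ≤ 0) ∧ y = f z}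

/-- The relative extremal function of `E` in `Ω`. -/
noncomputable def relExtremal {V : Type*} [NormedAddCommGroup V] [NormedSpace ℂ V]
    (E Ω : Set V) (z : V) : ℝ :=
  sSup {y | ∃ f : V → ℝ, IsPSHOn f Ω ∧ (∀ x ∈ Ω, f x ≤ 0) ∧ (∀ x ∈ E, f x ≤ -1) ∧ y = f z}

/-- The function `h_E` measuring local growth of plurisubharmonic functions. -/
noncomputable def hFun {V : Type*} [NormedAddCommGroup V] [NormedSpace ℂ V]
    (A E Ω : Set V) (z : V) : ℝ :=
  sSup {y | ∃ f : V → ℝ, IsPSHOn f Ω ∧ (∀ x ∈ Ω, f x ≤ 0) ∧ -1 ≤ sSup (f '' A) ∧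
    y = f z - sSup (f '' E)}

/-- The inclusion of `ℝⁿ` into `ℂⁿ`. -/
noncomputable def embedR {n : ℕ} (x : EuclideanSpace ℝ (Fin n)) : EuclideanSpace ℂ (Fin n) :=
  WithLp.toLp 2 (fun i => ((x i : ℝ) : ℂ))

/-- `γ` is the Siciak (logarithmic) capacity of `E`:
`limsup_{s→∞} ( sup_{B_c(0,s)} V_E − log s ) = −log γ`. -/
def HasSiciakCapacity {V : Type*} [NormedAddCommGroup V] [NormedSpace ℂ V]
    (E : Set V) (γ : ℝ) : Prop :=
  Filter.limsup (fun s : ℝ => sSup (siciak E '' Metric.closedBall (0 : V) s) - Real.log s)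
    Filter.atTop = -Real.log γ

/-!
If `f` competes for `h_E` and `M = sup_E f < 0`, then `f / |M|` competes for the relative
extremal function `u = u_{E,Ω}`, so `f ≤ |M| u` on `Ω`. Evaluating on `A` gives
`-1 ≤ sup_A f ≤ |M| sup_A u`, i.e. `|M| ≤ 1 / |sup_A u|`, and hence
`f z - M ≤ |M| (u z + 1) ≤ (u z + 1) / |sup_A u|`.
-/

theorem upperSemicontinuousOn_coe_ereal_iff {α : Type*} [TopologicalSpace α] {f : α → ℝ}
    {s : Set α} : UpperSemicontinuousOn (fun x => (f x : EReal)) s ↔ UpperSemicontinuousOn f s :=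
  ⟨fun h x hx y hy => (h x hx y (EReal.coe_lt_coe_iff.2 hy)).mono fun _ => EReal.coe_lt_coe_iff.1,
    fun h => continuous_coe_real_ereal.comp_upperSemicontinuousOn h fun _ _ => EReal.coe_le_coe⟩

section PSH

variable {V : Type*} [NormedAddCommGroup V] [NormedSpace ℂ V] {f g : V → ℝ} {Ω : Set V}

theorem isPSHOn_iff : IsPSHOn f Ω ↔ UpperSemicontinuousOn f Ω ∧
    ∀ a ∈ Ω, ∀ b : V, ∀ r : ℝ, 0 < r → (∀ w : ℂ, ‖w‖ ≤ r → a + w • b ∈ Ω) →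
      ∀ G : ℝ → ℝ, Continuous G → (∀ θ : ℝ, f (a + circleMap 0 r θ • b) ≤ G θ) →
        f a ≤ (2 * Real.pi)⁻¹ * ∫ θ in (0 : ℝ)..(2 * Real.pi), G θ := by
  simp only [IsPSHOn, IsPSHOnE, EReal.coe_le_coe_iff, upperSemicontinuousOn_coe_ereal_iff]

theorem isPSHOn_const (c : ℝ) (Ω : Set V) : IsPSHOn (fun _ => c) Ω := by
  refine isPSHOn_iff.2 ⟨upperSemicontinuousOn_const, fun _ _ _ _ _ _ G hG hcG => ?_⟩
  calc c = (2 * Real.pi)⁻¹ * ∫ _ in (0 : ℝ)..(2 * Real.pi), c := by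
        rw [intervalIntegral.integral_const, sub_zero, smul_eq_mul, ← mul_assoc,
          inv_mul_cancel₀ (by positivity), one_mul]
    _ ≤ (2 * Real.pi)⁻¹ * ∫ θ in (0 : ℝ)..(2 * Real.pi), G θ := by
        gcongr
        exact intervalIntegral.integral_mono_on (by positivity) intervalIntegrable_const
          (hG.intervalIntegrable _ _) fun θ _ => hcG θ

theorem IsPSHOn.const_mul (hf : IsPSHOn f Ω) {c : ℝ} (hc : 0 < c) :
    IsPSHOn (fun x => c * f x) Ω := by
  obtain ⟨husc, hmean⟩ := isPSHOn_iff.1 hf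
  refine isPSHOn_iff.2 ⟨(continuous_const_mul c).comp_upperSemicontinuousOn husc
    (monotone_mul_left_of_nonneg hc.le), fun a ha b r hr hdisc G hG hfG => ?_⟩
  have := hmean a ha b r hr hdisc (fun θ => G θ / c) (hG.div_const c)
    fun θ => (le_div_iff₀' hc).2 (hfG θ)
  rwa [intervalIntegral.integral_div, mul_div_assoc', le_div_iff₀' hc] at this

theorem IsPSHOn.max (hf : IsPSHOn f Ω) (hg : IsPSHOn g Ω) :
    IsPSHOn (fun x => max (f x) (g x)) Ω := by
  obtain ⟨hf_usc, hf_mean⟩ := isPSHOn_iff.1 hf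
  obtain ⟨hg_usc, hg_mean⟩ := isPSHOn_iff.1 hg
  exact isPSHOn_iff.2 ⟨hf_usc.sup hg_usc, fun a ha b r hr hdisc G hG hfgG => max_le
    (hf_mean a ha b r hr hdisc G hG fun θ => (le_max_left _ _).trans (hfgG θ))
    (hg_mean a ha b r hr hdisc G hG fun θ => (le_max_right _ _).trans (hfgG θ))⟩

theorem isPluripolar_empty [Nonempty V] : IsPluripolar (∅ : Set V) :=
  ⟨fun _ => ((0 : ℝ) : EReal), isPSHOn_const 0 univ,
    fun h => EReal.coe_ne_bot 0 (h (Classical.arbitrary V)), fun _ => False.elim⟩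

theorem nonempty_of_not_isPluripolar [Nonempty V] {E : Set V} (h : ¬IsPluripolar E) :
    E.Nonempty :=
  nonempty_iff_ne_empty.2 fun hE => h (hE ▸ isPluripolar_empty)

end PSH

section RelExtremal

variable {V : Type*} [NormedAddCommGroup V] [NormedSpace ℂ V] {E Ω : Set V} {f : V → ℝ} {x : V}

theorem le_relExtremal (hf : IsPSHOn f Ω) (hf0 : ∀ y ∈ Ω, f y ≤ 0) (hfE : ∀ y ∈ E, f y ≤ -1)
    (hx : x ∈ Ω) : f x ≤ relExtremal E Ω x :=
  le_csSup ⟨0, by rintro _ ⟨g, -, hg0, -, rfl⟩; exact hg0 x hx⟩ ⟨f, hf, hf0, hfE, rfl⟩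

theorem relExtremal_nonpos (hx : x ∈ Ω) : relExtremal E Ω x ≤ 0 :=
  Real.sSup_nonpos <| by rintro _ ⟨g, -, hg0, -, rfl⟩; exact hg0 x hx

theorem neg_one_le_relExtremal (hx : x ∈ Ω) : -1 ≤ relExtremal E Ω x :=
  le_relExtremal (isPSHOn_const (-1) Ω) (fun _ _ => by norm_num) (fun _ _ => le_rfl) hx

theorem le_mul_relExtremal (hf : IsPSHOn f Ω) (hf0 : ∀ y ∈ Ω, f y ≤ 0) {m : ℝ} (hm : 0 ≤ m)
    (hfE : ∀ y ∈ E, f y ≤ -m) (hx : x ∈ Ω) : f x ≤ m * relExtremal E Ω x := by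
  rcases hm.eq_or_lt with rfl | hm
  · simpa using hf0 x hx
  refine (inv_mul_le_iff₀ hm).1 (le_relExtremal (hf.const_mul (inv_pos.2 hm))
    (fun y hy => mul_nonpos_of_nonneg_of_nonpos (inv_nonneg.2 hm.le) (hf0 y hy))
    (fun y hy => ?_) hx)
  rw [inv_mul_le_iff₀ hm]
  linarith [hfE y hy]

theorem exists_lt_of_lt_relExtremal {c : ℝ} (h : c < relExtremal E Ω x) :
    ∃ p : V → ℝ, IsPSHOn p Ω ∧ (∀ y ∈ Ω, p y ≤ 0) ∧ (∀ y ∈ E, p y ≤ -1) ∧ c < p x := by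
  obtain ⟨_, ⟨p, hp, hp0, hpE, rfl⟩, hcp⟩ := exists_lt_of_lt_csSup (by exact
    ⟨-1, fun _ => -1, isPSHOn_const _ _, fun _ _ => by norm_num, fun _ _ => le_rfl, rfl⟩) h
  exact ⟨p, hp, hp0, hpE, hcp⟩

end RelExtremal

theorem Real.sSup_nonpos_of_not_bddAbove_of_pos {T : Set ℝ}
    (h : ∀ y ∈ T, 0 < y → ¬BddAbove T) : sSup T ≤ 0 := by
  by_cases hT : BddAbove T
  · exact Real.sSup_nonpos fun y hy => not_lt.1 fun hy0 => h y hy hy0 hT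
  · exact (Real.sSup_of_not_bddAbove hT).le

section HFun

variable {V : Type*} [NormedAddCommGroup V] [NormedSpace ℂ V] {A E Ω : Set V} {f : V → ℝ} {z : V}

theorem sub_sSup_image_le_of_sSup_relExtremal_neg (hAΩ : A ⊆ Ω) (hEΩ : E ⊆ Ω)
    (hA : A.Nonempty) (hS : sSup (relExtremal E Ω '' A) < 0) (hf : IsPSHOn f Ω)
    (hf0 : ∀ y ∈ Ω, f y ≤ 0) (hfA : -1 ≤ sSup (f '' A)) (hz : z ∈ Ω) :
    f z - sSup (f '' E) ≤ (relExtremal E Ω z + 1) / -sSup (relExtremal E Ω '' A) := by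
  set u := relExtremal E Ω
  set S := sSup (u '' A)
  set M := sSup (f '' E)
  have hfE_nonpos : ∀ y ∈ f '' E, y ≤ 0 := forall_mem_image.2 fun y hy => hf0 y (hEΩ hy)
  have hM : M ≤ 0 := Real.sSup_nonpos hfE_nonpos
  have hfu : ∀ y ∈ Ω, f y ≤ -M * u y := fun y hy => le_mul_relExtremal hf hf0 (neg_nonneg.2 hM)
    (fun y hy => by simpa using le_csSup ⟨0, hfE_nonpos⟩ (mem_image_of_mem f hy)) hy
  have hfA_le : sSup (f '' A) ≤ -M * S := csSup_le (hA.image f) <| forall_mem_image.2 fun a ha =>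
    (hfu a (hAΩ ha)).trans <| mul_le_mul_of_nonneg_left (le_csSup
      ⟨0, forall_mem_image.2 fun y hy => relExtremal_nonpos (hAΩ hy)⟩ (mem_image_of_mem u ha))
      (neg_nonneg.2 hM)
  have hMS : -M * -S ≤ 1 := by rw [mul_neg]; linarith
  rw [le_div_iff₀ (neg_pos.2 hS)]
  calc (f z - M) * -S ≤ (-M * u z - M) * -S :=
        mul_le_mul_of_nonneg_right (by linarith [hfu z hz]) (neg_nonneg.2 hS.le)
    _ = (-M * -S) * (u z + 1) := by ring
    _ ≤ 1 * (u z + 1) := by gcongr; linarith [neg_one_le_relExtremal (E := E) hz]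
    _ = u z + 1 := one_mul _

theorem hFun_le_div_of_sSup_relExtremal_neg (hAΩ : A ⊆ Ω) (hEΩ : E ⊆ Ω) (hA : A.Nonempty)
    (hS : sSup (relExtremal E Ω '' A) < 0) (hz : z ∈ Ω) :
    hFun A E Ω z ≤ (relExtremal E Ω z + 1) / -sSup (relExtremal E Ω '' A) :=
  Real.sSup_le (by
      rintro _ ⟨f, hf, hf0, hfA, rfl⟩
      exact sub_sSup_image_le_of_sSup_relExtremal_neg hAΩ hEΩ hA hS hf hf0 hfA hz)
    (div_nonneg (by linarith [neg_one_le_relExtremal (E := E) hz]) (neg_nonneg.2 hS.le))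

theorem exists_hFun_competitor_ge (hAΩ : A ⊆ Ω) (hEΩ : E ⊆ Ω) (hA : A.Nonempty)
    (hS : sSup (relExtremal E Ω '' A) = 0) (hf : IsPSHOn f Ω) (hf0 : ∀ y ∈ Ω, f y ≤ 0)
    (hM : sSup (f '' E) < 0) {t : ℝ} (ht : 0 < t) :
    ∃ g : V → ℝ, IsPSHOn g Ω ∧ (∀ y ∈ Ω, g y ≤ 0) ∧ -1 ≤ sSup (g '' A) ∧
      t * (f z - sSup (f '' E)) ≤ g z - sSup (g '' E) := by
  set M := sSup (f '' E)
  set s := -t * M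
  have hs : 0 < s := by nlinarith
  have hE : E.Nonempty := (nonempty_iff_ne_empty.2 fun h : f '' E = ∅ => by
    simp [M, h] at hM).of_image
  obtain ⟨_, ⟨a, haA, rfl⟩, ha⟩ := exists_lt_of_lt_csSup (hA.image (relExtremal E Ω))
    (hS ▸ neg_neg_of_pos (inv_pos.2 hs))
  obtain ⟨p, hp, hp0, hpE, hpa⟩ := exists_lt_of_lt_relExtremal ha
  set g := fun y => max (t * f y) (s * p y)
  have hg0 : ∀ y ∈ Ω, g y ≤ 0 := fun y hy => max_le
    (mul_nonpos_of_nonneg_of_nonpos ht.le (hf0 y hy))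
    (mul_nonpos_of_nonneg_of_nonpos hs.le (hp0 y hy))
  refine ⟨g, (hf.const_mul ht).max (hp.const_mul hs), hg0, ?_, ?_⟩
  · have hspa : -1 < s * p a := by
      simpa [mul_neg, mul_inv_cancel₀ hs.ne'] using mul_lt_mul_of_pos_left hpa hs
    exact hspa.le.trans <| (le_max_right _ _).trans <|
      le_csSup ⟨0, forall_mem_image.2 fun y hy => hg0 y (hAΩ hy)⟩ (mem_image_of_mem g haA)
  · have hgE : sSup (g '' E) ≤ -s := csSup_le (hE.image g) <| forall_mem_image.2 fun y hy => by
      have hfy : f y ≤ M :=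
        le_csSup ⟨0, forall_mem_image.2 fun y hy => hf0 y (hEΩ hy)⟩ (mem_image_of_mem f hy)
      have hpy := hpE y hy
      exact max_le (by nlinarith) (by nlinarith)
    have hgz : t * f z ≤ g z := le_max_left _ _
    linarith

/- When `sup_A u_{E,Ω} = 0` the right-hand side of the theorem is the junk value `x / 0 = 0`.
The bound still holds: a positive value of `h_E` can be blown up by the competitors above, and
`sSup` of an unbounded set of reals is `0`. -/
theorem hFun_nonpos_of_sSup_relExtremal_eq_zero (hAΩ : A ⊆ Ω) (hEΩ : E ⊆ Ω) (hA : A.Nonempty)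
    (hS : sSup (relExtremal E Ω '' A) = 0) (hz : z ∈ Ω) : hFun A E Ω z ≤ 0 := by
  refine Real.sSup_nonpos_of_not_bddAbove_of_pos ?_
  rintro _ ⟨f, hf, hf0, -, rfl⟩ hpos ⟨B, hB⟩
  have hM : sSup (f '' E) < 0 := by linarith [hf0 z hz]
  obtain ⟨g, hg, hg0, hgA, hgz⟩ := exists_hFun_competitor_ge (z := z) hAΩ hEΩ hA hS hf hf0 hM
    (t := (|B| + 1) / (f z - sSup (f '' E))) (by positivity)
  rw [div_mul_cancel₀ _ hpos.ne'] at hgz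
  linarith [le_abs_self B, hB ⟨g, hg, hg0, hgA, rfl⟩]

end HFun

theorem hFun_le_relExtremal_general {n : ℕ} (Ω A E : Set (EuclideanSpace ℂ (Fin n)))
    (hAΩ : closure A ⊆ Ω)
    (hEΩ : closure E ⊆ Ω)
    (hAnp : ¬ IsPluripolar A) :
    ∀ z ∈ Ω, hFun A E Ω z ≤ (relExtremal E Ω z + 1) / |sSup (relExtremal E Ω '' A)| := by
  intro z hz
  have hAΩ' : A ⊆ Ω := subset_closure.trans hAΩ
  have hEΩ' : E ⊆ Ω := subset_closure.trans hEΩ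
  have hA : A.Nonempty := nonempty_of_not_isPluripolar hAnp
  rcases (Real.sSup_nonpos (forall_mem_image.2 fun a ha =>
    relExtremal_nonpos (E := E) (hAΩ' ha))).lt_or_eq with hS | hS
  · rw [abs_of_neg hS]
    exact hFun_le_div_of_sSup_relExtremal_neg hAΩ' hEΩ' hA hS hz
  · rw [hS, abs_zero, div_zero]
    exact hFun_nonpos_of_sSup_relExtremal_eq_zero hAΩ' hEΩ' hA hS hz

/-- upper bound for `h_E` by the relative extremal function. -/
theorem hFun_le_relExtremal {n : ℕ} (Ω A E : Set (EuclideanSpace ℂ (Fin n)))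
    (hΩ : IsOpen Ω)
    (hAc : IsCompact (closure A)) (hAΩ : closure A ⊆ Ω)
    (hEc : IsCompact (closure E)) (hEΩ : closure E ⊆ Ω)
    (hAnp : ¬ IsPluripolar A) (hEnp : ¬ IsPluripolar E) :
    ∀ z ∈ Ω, hFun A E Ω z ≤ (relExtremal E Ω z + 1) / |sSup (relExtremal E Ω '' A)| :=
  hFun_le_relExtremal_general Ω A E hAΩ hEΩ hAnp
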